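/- arXiv:2604.10563 — 2 statements merged into one kernel-verified Lean document; each statement's English description precedes it below -/
import Mathlib

section
/- Let v: [0,s]_ℤ → ℝ be an M♮-concave function, let p ∈ ℝ₊^M be a price vector, and let D(p) be the set of maximizers of x ↦ v(x) − Σ_j p_j x_j over [0,s]_ℤ. If x ∈ D(p) and X ⊆ M satisfies x(X) > μ(X;p), where μ(X;p) := min{x'(X) | x' ∈ D(p)}, then there exist j ∈ X and j' ∈ (M \ X) ∪ {0} such that x − χ_j + χ_{j'} ∈ D(p) (with χ_0 := 0). -/
open Finset

/-- If `x` is a demanded bundle with `x(X)` strictly above the minimum requirement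
`μ(X;p)`, then some unit of a good in `X` can be dropped or exchanged for a good
outside `X` while remaining in the demand set. -/
theorem stmt2 {M : Type*} [Fintype M] [DecidableEq M]
    (s : M → ℤ) (hs : ∀ j, 0 ≤ s j)
    (v : (M → ℤ) → ℝ)
    (box : Set (M → ℤ)) (hbox : box = {x | ∀ j, 0 ≤ x j ∧ x j ≤ s j})
    -- M♮-concavity of `v` on the box
    (hMconc : ∀ x ∈ box, ∀ x' ∈ box, ∀ j, x' j < x j →
      (v x + v x' ≤ v (x - Pi.single j 1) + v (x' + Pi.single j 1)) ∨
      (∃ k, x k < x' k ∧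
        v x + v x' ≤ v (x - Pi.single j 1 + Pi.single k 1)
                    + v (x' + Pi.single j 1 - Pi.single k 1)))
    (p : M → ℝ) (hp : ∀ j, 0 ≤ p j)
    (D : Set (M → ℤ))
    (hD : D = {x ∈ box | ∀ y ∈ box,
        v y - ∑ j, p j * (y j : ℝ) ≤ v x - ∑ j, p j * (x j : ℝ)})
    (x : M → ℤ) (hx : x ∈ D) (X : Finset M)
    (hover : ∃ x' ∈ D, ∑ j ∈ X, x' j < ∑ j ∈ X, x j) :
    ∃ j ∈ X, (x - Pi.single j 1 ∈ D) ∨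
      ∃ j', j' ∉ X ∧ x - Pi.single j 1 + Pi.single j' 1 ∈ D := by
  classical
  set f : (M → ℤ) → ℝ := fun y => v y - ∑ j, p j * (y j : ℝ) with hfdef
  have memBox : ∀ y : M → ℤ, y ∈ box ↔ ∀ j, 0 ≤ y j ∧ y j ≤ s j := by
    intro y; rw [hbox]; exact Iff.rfl
  have memD : ∀ y : M → ℤ, y ∈ D ↔ y ∈ box ∧ ∀ z ∈ box, f z ≤ f y := by
    intro y; rw [hD]; exact Iff.rfl
  obtain ⟨hxbox, hxmax⟩ := (memD x).1 hx
  have hxi := (memBox x).1 hxbox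
  have key : ∀ x' ∈ D, ∀ a b : M → ℤ, a ∈ box → b ∈ box → a + b = x + x' →
      v x + v x' ≤ v a + v b → a ∈ D ∧ b ∈ D := by
    intro x' hx' a b ha hb hab hv
    obtain ⟨hx'box, hx'max⟩ := (memD x').1 hx'
    have hsum : (∑ i, p i * (a i : ℝ)) + ∑ i, p i * (b i : ℝ)
        = (∑ i, p i * (x i : ℝ)) + ∑ i, p i * (x' i : ℝ) := by
      rw [← Finset.sum_add_distrib, ← Finset.sum_add_distrib]
      refine Finset.sum_congr rfl fun i _ => ?_
      have h1 : a i + b i = x i + x' i := congrFun hab i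
      have h2 : (a i : ℝ) + (b i : ℝ) = (x i : ℝ) + (x' i : ℝ) := by
        exact_mod_cast congrArg (Int.cast : ℤ → ℝ) h1
      rw [← mul_add, ← mul_add, h2]
    have ea : f a = v a - ∑ i, p i * (a i : ℝ) := rfl
    have eb : f b = v b - ∑ i, p i * (b i : ℝ) := rfl
    have ex : f x = v x - ∑ i, p i * (x i : ℝ) := rfl
    have ex' : f x' = v x' - ∑ i, p i * (x' i : ℝ) := rfl
    have hfa : f a ≤ f x := hxmax a ha
    have hfb : f b ≤ f x' := hx'max b hb
    refine ⟨(memD a).2 ⟨ha, fun z hz => ?_⟩, (memD b).2 ⟨hb, fun z hz => ?_⟩⟩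
    · have := hxmax z hz; linarith
    · have := hx'max z hz; linarith
  have main : ∀ n : ℕ, ∀ x', x' ∈ D → (∑ j ∈ X, x' j < ∑ j ∈ X, x j) →
      (∑ k ∈ X, (x' k - x k).toNat) = n →
      ∃ j ∈ X, (x - Pi.single j 1 ∈ D) ∨
        ∃ j', j' ∉ X ∧ x - Pi.single j 1 + Pi.single j' 1 ∈ D := by
    intro n
    induction n using Nat.strong_induction_on with
    | _ n ih =>
      intro x' hx'D hlt hphi
      obtain ⟨hx'box, _⟩ := (memD x').1 hx'D
      have hx'i := (memBox x').1 hx'box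
      obtain ⟨j, hjX, hj⟩ := Finset.exists_lt_of_sum_lt hlt
      rcases hMconc x hxbox x' hx'box j hj with h | ⟨k, hk, h⟩
      · have ha : x - Pi.single j 1 ∈ box := by
          rw [memBox]; intro i
          have h1 := hxi i; have h2 := hx'i i
          rcases eq_or_ne i j with rfl | hne
          · simp only [Pi.sub_apply, Pi.single_eq_same]; omega
          · simp only [Pi.sub_apply, Pi.single_apply, if_neg hne]; omega
        have hb : x' + Pi.single j 1 ∈ box := by
          rw [memBox]; intro i
          have h1 := hxi i; have h2 := hx'i i
          rcases eq_or_ne i j with rfl | hne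
          · simp only [Pi.add_apply, Pi.single_eq_same]; omega
          · simp only [Pi.add_apply, Pi.single_apply, if_neg hne]; omega
        have := key x' hx'D _ _ ha hb (by ring) h
        exact ⟨j, hjX, Or.inl this.1⟩
      · have hkj : k ≠ j := by intro e; subst e; omega
        have ha : x - Pi.single j 1 + Pi.single k 1 ∈ box := by
          rw [memBox]; intro i
          have h1 := hxi i; have h2 := hx'i i
          rcases eq_or_ne i j with rfl | hnej
          · simp only [Pi.add_apply, Pi.sub_apply, Pi.single_eq_same,
              Pi.single_apply, if_neg hkj.symm]
            omega
          · rcases eq_or_ne i k with rfl | hnek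
            · simp only [Pi.add_apply, Pi.sub_apply, Pi.single_eq_same,
                Pi.single_apply, if_neg hnej]
              omega
            · simp only [Pi.add_apply, Pi.sub_apply, Pi.single_apply,
                if_neg hnej, if_neg hnek]
              omega
        have hb : x' + Pi.single j 1 - Pi.single k 1 ∈ box := by
          rw [memBox]; intro i
          have h1 := hxi i; have h2 := hx'i i
          rcases eq_or_ne i j with rfl | hnej
          · simp only [Pi.add_apply, Pi.sub_apply, Pi.single_eq_same,
              Pi.single_apply, if_neg hkj.symm]
            omega
          · rcases eq_or_ne i k with rfl | hnek
            · simp only [Pi.add_apply, Pi.sub_apply, Pi.single_eq_same,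
                Pi.single_apply, if_neg hnej]
              omega
            · simp only [Pi.add_apply, Pi.sub_apply, Pi.single_apply,
                if_neg hnej, if_neg hnek]
              omega
        obtain ⟨haD, hbD⟩ := key x' hx'D _ _ ha hb (by ring) h
        by_cases hkX : k ∈ X
        · set x'' : M → ℤ := x' + Pi.single j 1 - Pi.single k 1 with hx''
          have hvals : ∀ i, x'' i = x' i + (if i = j then 1 else 0) - (if i = k then 1 else 0) := by
            intro i
            simp [hx'', Pi.single_apply]
          have hphi' : (∑ i ∈ X, (x'' i - x i).toNat) < n := by
            rw [← hphi]
            apply Finset.sum_lt_sum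
            · intro i _
              have := hvals i
              rcases eq_or_ne i j with rfl | hnej
              · rw [if_pos rfl, if_neg hkj.symm] at this; omega
              · rcases eq_or_ne i k with rfl | hnek
                · rw [if_neg hnej, if_pos rfl] at this; omega
                · rw [if_neg hnej, if_neg hnek] at this; omega
            · refine ⟨k, hkX, ?_⟩
              have := hvals k
              rw [if_neg hkj, if_pos rfl] at this
              omega
          have hlt' : ∑ i ∈ X, x'' i < ∑ i ∈ X, x i := by
            have : ∑ i ∈ X, x'' i = ∑ i ∈ X, x' i := by
              have e : ∀ i, x'' i = x' i + (if i = j then 1 else 0) - (if i = k then 1 else 0) :=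
                hvals
              calc ∑ i ∈ X, x'' i
                  = ∑ i ∈ X, (x' i + (if i = j then 1 else 0) - (if i = k then 1 else 0)) :=
                    Finset.sum_congr rfl fun i _ => e i
                _ = ∑ i ∈ X, x' i := by
                    rw [Finset.sum_sub_distrib, Finset.sum_add_distrib,
                      Finset.sum_ite_eq' X j (fun _ => (1:ℤ)),
                      Finset.sum_ite_eq' X k (fun _ => (1:ℤ)),
                      if_pos hjX, if_pos hkX]
                    ring
            omega
          exact ih _ hphi' x'' hbD hlt' rfl
        · exact ⟨j, hjX, Or.inr ⟨k, hkX, haD⟩⟩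
  obtain ⟨x', hx'D, hlt⟩ := hover
  exact main _ x' hx'D hlt rfl
end

section
/- Let ρ be a polymatroid rank function on M and w ∈ ℝ^M a weight vector with distinct values w̄₁ > ⋯ > w̄_t partitioning M into level sets M_k := {j | w_j = w̄_k}, with X_k := M₁ ∪ ⋯ ∪ M_k (X₀ = ∅). Then the set of maximizers of Σ_j w_j x_j over the base polyhedron B(ρ) equals the direct sum over k = 1,…,t of the base polyhedra B(ρ^{X_{k−1}})|_{M_k}, where ρ^X(S) := ρ(S∪X) − ρ(X) is the contraction. -/
open Finset


lemma submod_sets {M : Type*} [DecidableEq M] (ρ : Finset M → ℤ)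
    (hmono : ∀ ⦃S T : Finset M⦄, S ⊆ T → ρ S ≤ ρ T)
    (hsub : ∀ ⦃S T : Finset M⦄, S ⊆ T → ∀ e ∉ T,
      ρ (insert e T) - ρ T ≤ ρ (insert e S) - ρ S)
    (C : Finset M) : ∀ A B : Finset M, A ⊆ B → ρ (B ∪ C) - ρ B ≤ ρ (A ∪ C) - ρ A := by
  induction C using Finset.induction_on with
  | empty => intro A B h; simp
  | @insert e C he ih =>
    intro A B hAB
    by_cases hmem : e ∈ B ∪ C
    · have h1 : B ∪ insert e C = B ∪ C := by
        rw [Finset.union_insert, Finset.insert_eq_self.mpr hmem]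
      have h2 : A ∪ C ⊆ A ∪ insert e C :=
        Finset.union_subset_union subset_rfl (Finset.subset_insert _ _)
      have := hmono h2
      have := ih A B hAB
      rw [h1]; omega
    · have key := hsub (Finset.union_subset_union hAB (subset_refl C)) e hmem
      have := ih A B hAB
      rw [Finset.union_insert, Finset.union_insert]
      omega

lemma greedy_exists {M : Type*} [Fintype M] [DecidableEq M] (ρ : Finset M → ℤ)
    (hempty : ρ ∅ = 0)
    (hmono : ∀ ⦃S T : Finset M⦄, S ⊆ T → ρ S ≤ ρ T)
    (hsub : ∀ ⦃S T : Finset M⦄, S ⊆ T → ∀ e ∉ T,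
      ρ (insert e T) - ρ T ≤ ρ (insert e S) - ρ S)
    (w : M → ℝ) :
    ∃ z : M → ℤ, (∀ j, 0 ≤ z j) ∧ (∀ S : Finset M, ∑ j ∈ S, z j ≤ ρ S) ∧
      ∀ U : Finset M, (∀ a ∈ U, ∀ b, w a ≤ w b → b ∈ U) → ∑ j ∈ U, z j = ρ U := by
  classical
  set n := Fintype.card M with hn
  let e : M ≃ Fin n := Fintype.equivFin M
  let σ : Equiv.Perm (Fin n) := Tuple.sort (fun i => -w (e.symm i))
  let m : Fin n ≃ M := σ.trans e.symm
  have hanti : ∀ i j : Fin n, i ≤ j → w (m j) ≤ w (m i) := by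
    intro i j hij
    have := Tuple.monotone_sort (fun i => -w (e.symm i)) hij
    simpa [m, σ] using this
  set pref : ℕ → Finset M := fun k => (Finset.univ.filter fun i : Fin n => (i : ℕ) < k).image m
    with hpref
  have mem_pref : ∀ (x : M) (k : ℕ), x ∈ pref k ↔ (m.symm x : ℕ) < k := by
    intro x k
    simp only [hpref, Finset.mem_image, Finset.mem_filter, Finset.mem_univ, true_and]
    constructor
    · rintro ⟨i, hi, rfl⟩; simpa using hi
    · intro h; exact ⟨m.symm x, h, by simp⟩
  have pref_succ : ∀ x : M, pref ((m.symm x : ℕ) + 1) = insert x (pref (m.symm x)) := by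
    intro x
    ext y
    simp only [mem_pref, Finset.mem_insert, Nat.lt_succ_iff_lt_or_eq]
    constructor
    · rintro (h | h)
      · exact Or.inr h
      · left
        have h2 : m.symm y = m.symm x := Fin.ext h
        simpa using congrArg m h2
    · rintro (rfl | h)
      · exact Or.inr rfl
      · exact Or.inl h
  have notmem_pref : ∀ x : M, x ∉ pref (m.symm x : ℕ) := by
    intro x h; rw [mem_pref] at h; omega
  set z : M → ℤ := fun x => ρ (pref ((m.symm x : ℕ) + 1)) - ρ (pref (m.symm x : ℕ)) with hz
  have hz_eq : ∀ x : M, z x = ρ (insert x (pref (m.symm x : ℕ))) - ρ (pref (m.symm x : ℕ)) := by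
    intro x; rw [hz]; simp only []; rw [pref_succ]
  have hz_nonneg : ∀ x, 0 ≤ z x := by
    intro x
    rw [hz_eq]
    have := hmono (Finset.subset_insert x (pref (m.symm x : ℕ)))
    omega
  have hsum_le : ∀ S : Finset M, ∑ j ∈ S, z j ≤ ρ S := by
    intro S
    induction S using Finset.strongInduction with
    | _ S ih =>
      rcases S.eq_empty_or_nonempty with rfl | hS
      · simp [hempty]
      · obtain ⟨x, hxS, hxmax⟩ := S.exists_max_image (fun y => (m.symm y : ℕ)) hS
        have h1 := ih _ (Finset.erase_ssubset hxS)
        have hsub1 : S.erase x ⊆ pref (m.symm x : ℕ) := by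
          intro y hy
          rw [mem_pref]
          rcases Finset.mem_erase.mp hy with ⟨hne, hyS⟩
          have h2 := hxmax y hyS
          have h3 : m.symm y ≠ m.symm x := fun h => hne (by simpa using congrArg m h)
          have h4 : (m.symm y : ℕ) ≠ (m.symm x : ℕ) := fun h => h3 (Fin.ext h)
          omega
        have key := hsub hsub1 x (notmem_pref x)
        have hins : insert x (S.erase x) = S := Finset.insert_erase hxS
        have hsplit : ∑ j ∈ S, z j = z x + ∑ j ∈ S.erase x, z j :=
          (Finset.add_sum_erase _ _ hxS).symm
        rw [hins] at key
        rw [hsplit, hz_eq]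
        omega
  have hpref_sum : ∀ k : ℕ, k ≤ n → ∑ j ∈ pref k, z j = ρ (pref k) := by
    intro k
    induction k with
    | zero =>
      intro _
      have : pref 0 = ∅ := by
        ext y; rw [mem_pref]; simp
      rw [this]; simp [hempty]
    | succ k ih =>
      intro hk
      have hk' : k < n := hk
      set i : Fin n := ⟨k, hk'⟩ with hi
      have hmi : (m.symm (m i) : ℕ) = k := by simp [hi]
      have h1 : pref (k + 1) = insert (m i) (pref k) := by
        have := pref_succ (m i)
        rwa [hmi] at this
      have h2 : m i ∉ pref k := by rw [mem_pref, hmi]; omega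
      rw [h1, Finset.sum_insert h2, ih (le_of_lt hk'), hz, ← h1]
      simp only [hmi]
      omega
  refine ⟨z, hz_nonneg, hsum_le, ?_⟩
  intro U hup
  have hdown : ∀ i j : Fin n, i ≤ j → m j ∈ U → m i ∈ U := by
    intro i j hij hj
    exact hup (m j) hj (m i) (hanti i j hij)
  have hUp : U = pref U.card := by
    ext x
    rw [mem_pref]
    constructor
    · intro hx
      have hsubIic : Finset.Iic (m.symm x) ⊆ U.image m.symm := by
        intro j hj
        rw [Finset.mem_Iic] at hj
        rw [Finset.mem_image]
        refine ⟨m j, hdown j (m.symm x) hj (by simpa using hx), by simp⟩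
      have hcard := Finset.card_le_card hsubIic
      rw [Fin.card_Iic, Finset.card_image_of_injective _ m.symm.injective] at hcard
      omega
    · intro hx
      by_contra hxU
      have hsubIio : U.image m.symm ⊆ Finset.Iio (m.symm x) := by
        intro j hj
        rw [Finset.mem_image] at hj
        obtain ⟨y, hyU, rfl⟩ := hj
        rw [Finset.mem_Iio]
        by_contra hge
        push_neg at hge
        exact hxU (by simpa using hdown (m.symm x) (m.symm y) hge (by simpa using hyU))
      have hcard := Finset.card_le_card hsubIio
      rw [Fin.card_Iio, Finset.card_image_of_injective _ m.symm.injective] at hcard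
      omega
  have hcard : U.card ≤ n := le_trans (Finset.card_le_card (Finset.subset_univ U)) (by simp [hn])
  rw [hUp]
  exact hpref_sum _ hcard

lemma abel_aux (g D : ℕ → ℝ) : ∀ n : ℕ, ∑ c ∈ Finset.range n, g c * (D (c+1) - D c)
    = (∑ c ∈ Finset.range n, (g c - g (c+1)) * D (c+1)) + g n * D n - g 0 * D 0 := by
  intro n
  induction n with
  | zero => simp
  | succ n ih =>
    rw [Finset.sum_range_succ, Finset.sum_range_succ (f := fun c => (g c - g (c+1)) * D (c+1)), ih]
    ring

/-- The maximizers of a linear objective over a base polyhedron decompose as the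
direct sum, over the level sets of the weight vector, of base polyhedra of
contractions by the union of higher level sets. -/
theorem stmt7 {M : Type*} [Fintype M] [DecidableEq M]
    (ρ : Finset M → ℤ)
    (hnonneg : ∀ S, 0 ≤ ρ S)
    (hempty : ρ ∅ = 0)
    (hmono : ∀ ⦃S T : Finset M⦄, S ⊆ T → ρ S ≤ ρ T)
    (hsub : ∀ ⦃S T : Finset M⦄, S ⊆ T → ∀ e ∉ T,
      ρ (insert e T) - ρ T ≤ ρ (insert e S) - ρ S)
    (w : M → ℝ) (t : ℕ) (wb : Fin t → ℝ)
    (hanti : StrictAnti wb)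
    (hlevels : ∀ j, ∃ k, w j = wb k)
    (B : Set (M → ℤ))
    (hB : B = {x | (∀ j, 0 ≤ x j) ∧
        (∀ S : Finset M, ∑ j ∈ S, x j ≤ ρ S) ∧ ∑ j, x j = ρ Finset.univ}) :
    {x ∈ B | ∀ y ∈ B, ∑ j, w j * (y j : ℝ) ≤ ∑ j, w j * (x j : ℝ)}
      = {x : M → ℤ | (∀ j, 0 ≤ x j) ∧ ∀ k : Fin t,
          (∀ S ⊆ Finset.univ.filter (fun j => w j = wb k),
            ∑ j ∈ S, x j ≤
              ρ (S ∪ Finset.univ.filter (fun j => wb k < w j))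
                - ρ (Finset.univ.filter (fun j => wb k < w j))) ∧
          ∑ j ∈ Finset.univ.filter (fun j => w j = wb k), x j =
            ρ ((Finset.univ.filter (fun j => w j = wb k))
                ∪ Finset.univ.filter (fun j => wb k < w j))
              - ρ (Finset.univ.filter (fun j => wb k < w j))} := by
  classical
  subst hB
  set lvl : M → Fin t := fun j => (hlevels j).choose with hlvldef
  have hwlvl : ∀ j, w j = wb (lvl j) := fun j => (hlevels j).choose_spec
  set X : ℕ → Finset M := fun c => Finset.univ.filter (fun j => (lvl j : ℕ) < c) with hX
  set Mn : ℕ → Finset M := fun c => Finset.univ.filter (fun j => (lvl j : ℕ) = c) with hMn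
  have hX0 : X 0 = ∅ := by ext j; simp [hX]
  have hXt : X t = Finset.univ := by
    ext j; simp only [hX, Finset.mem_filter, Finset.mem_univ, true_and, iff_true]
    exact (lvl j).isLt
  have hA : ∀ k : Fin t, Finset.univ.filter (fun j => wb k < w j) = X (k : ℕ) := by
    intro k; ext j
    simp only [hX, Finset.mem_filter, Finset.mem_univ, true_and]
    rw [hwlvl j, hanti.lt_iff_gt]
    exact Fin.lt_def
  have hMk : ∀ k : Fin t, Finset.univ.filter (fun j => w j = wb k) = Mn (k : ℕ) := by
    intro k; ext j
    simp only [hMn, Finset.mem_filter, Finset.mem_univ, true_and]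
    rw [hwlvl j]
    constructor
    · intro h; exact congrArg Fin.val (hanti.injective h)
    · intro h; exact congrArg wb (Fin.ext h)
  have hMA : ∀ k : Fin t, (Finset.univ.filter (fun j => w j = wb k))
      ∪ Finset.univ.filter (fun j => wb k < w j) = X ((k : ℕ) + 1) := by
    intro k; rw [hMk, hA]; ext j
    simp only [hMn, hX, Finset.mem_union, Finset.mem_filter, Finset.mem_univ, true_and]
    omega
  have hXsplit : ∀ c, X (c + 1) = X c ∪ Mn c := by
    intro c; ext j
    simp only [hX, hMn, Finset.mem_union, Finset.mem_filter, Finset.mem_univ, true_and]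
    omega
  have hdisj : ∀ c, Disjoint (X c) (Mn c) := by
    intro c
    rw [Finset.disjoint_left]
    intro j hj hj'
    simp only [hX, Finset.mem_filter, Finset.mem_univ, true_and] at hj
    simp only [hMn, Finset.mem_filter, Finset.mem_univ, true_and] at hj'
    omega
  have hsplit_sum : ∀ (c : ℕ) (y : M → ℤ),
      ∑ j ∈ X (c + 1), y j = ∑ j ∈ X c, y j + ∑ j ∈ Mn c, y j := by
    intro c y; rw [hXsplit c, Finset.sum_union (hdisj c)]
  set g : ℕ → ℝ := fun c => if h : c < t then wb ⟨c, h⟩ else 0 with hg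
  have hwsum : ∀ y : M → ℤ, ∑ j, w j * (y j : ℝ)
      = ∑ c ∈ Finset.range t,
          g c * (((∑ j ∈ X (c + 1), y j : ℤ) : ℝ) - ((∑ j ∈ X c, y j : ℤ) : ℝ)) := by
    intro y
    have h1 : ∑ j, w j * (y j : ℝ)
        = ∑ k : Fin t, ∑ j ∈ Finset.univ.filter (fun j => lvl j = k), w j * (y j : ℝ) :=
      (Finset.sum_fiberwise _ _ _).symm
    have h2 : ∀ k : Fin t, ∑ j ∈ Finset.univ.filter (fun j => lvl j = k), w j * (y j : ℝ)
        = g (k : ℕ) * ((∑ j ∈ Mn (k : ℕ), y j : ℤ) : ℝ) := by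
      intro k
      have hg' : g (k : ℕ) = wb k := by rw [hg]; simp
      have hfib : Finset.univ.filter (fun j => lvl j = k) = Mn (k : ℕ) := by
        ext j; simp [hMn, Fin.ext_iff]
      rw [hg', hfib, Int.cast_sum, Finset.mul_sum]
      apply Finset.sum_congr rfl
      intro j hj
      have hlj : lvl j = k := by
        simp only [hMn, Finset.mem_filter, Finset.mem_univ, true_and] at hj
        exact Fin.ext hj
      rw [hwlvl j, hlj]
    rw [h1]
    rw [Finset.sum_congr rfl (fun k _ => h2 k)]
    rw [Fin.sum_univ_eq_sum_range (fun c => g c * ((∑ j ∈ Mn c, y j : ℤ) : ℝ)) t]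
    apply Finset.sum_congr rfl
    intro c _
    rw [hsplit_sum c y]
    push_cast
    ring
  have hdiff : ∀ x y : M → ℤ, (∑ j, x j) = (∑ j, y j) →
      (∑ j, w j * (x j : ℝ)) - (∑ j, w j * (y j : ℝ))
      = ∑ c ∈ Finset.range t, (g c - g (c + 1)) *
          (((∑ j ∈ X (c + 1), x j : ℤ) : ℝ) - ((∑ j ∈ X (c + 1), y j : ℤ) : ℝ)) := by
    intro x y hxy
    set D : ℕ → ℝ := fun c => ((∑ j ∈ X c, x j : ℤ) : ℝ) - ((∑ j ∈ X c, y j : ℤ) : ℝ) with hD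
    have hD0 : D 0 = 0 := by simp [hD, hX0]
    have hDt : D t = 0 := by
      simp only [hD, hXt]
      rw [hxy]; ring
    have h1 : (∑ j, w j * (x j : ℝ)) - (∑ j, w j * (y j : ℝ))
        = ∑ c ∈ Finset.range t, g c * (D (c + 1) - D c) := by
      rw [hwsum x, hwsum y, ← Finset.sum_sub_distrib]
      apply Finset.sum_congr rfl
      intro c _
      simp only [hD]
      ring
    rw [h1, abel_aux g D t, hD0, hDt]
    simp [hD]
  have hcoef_pos : ∀ c, c + 1 < t → 0 < g c - g (c + 1) := by
    intro c hc
    rw [hg]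
    simp only [dif_pos (by omega : c < t), dif_pos hc]
    have : (⟨c, by omega⟩ : Fin t) < ⟨c + 1, hc⟩ := by simp [Fin.lt_def]
    have := hanti this
    linarith
  ext x
  simp only [Set.mem_setOf_eq, Set.mem_sep_iff]
  constructor
  · rintro ⟨⟨hx0, hxle, hxtot⟩, hxmax⟩
    obtain ⟨z, hz0, hzle, hztight⟩ := greedy_exists ρ hempty hmono hsub w
    have hztot : ∑ j, z j = ρ Finset.univ :=
      hztight Finset.univ (fun a _ b _ => Finset.mem_univ b)
    have hzX : ∀ c, ∑ j ∈ X c, z j = ρ (X c) := by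
      intro c
      apply hztight
      intro a ha b hw
      simp only [hX, Finset.mem_filter, Finset.mem_univ, true_and] at ha ⊢
      have h1 : wb (lvl a) ≤ wb (lvl b) := by rw [← hwlvl a, ← hwlvl b]; exact hw
      have h2 : lvl b ≤ lvl a := hanti.le_iff_ge.mp h1
      have h3 : (lvl b : ℕ) ≤ (lvl a : ℕ) := h2
      omega
    have hmax' := hxmax z ⟨hz0, hzle, hztot⟩
    have hEq := hdiff x z (by rw [hxtot, hztot])
    have hterm : ∀ c ∈ Finset.range t, (g c - g (c + 1)) *
        (((∑ j ∈ X (c + 1), x j : ℤ) : ℝ) - ((∑ j ∈ X (c + 1), z j : ℤ) : ℝ)) ≤ 0 := by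
      intro c hc
      rw [Finset.mem_range] at hc
      rcases lt_or_eq_of_le (Nat.succ_le_of_lt hc) with h | h
      · have h1 := hcoef_pos c h
        have h2 : ((∑ j ∈ X (c + 1), x j : ℤ) : ℝ) - ((∑ j ∈ X (c + 1), z j : ℤ) : ℝ) ≤ 0 := by
          rw [hzX (c + 1)]
          have h3 : ((∑ j ∈ X (c + 1), x j : ℤ) : ℝ) ≤ ((ρ (X (c + 1)) : ℤ) : ℝ) :=
            Int.cast_le.mpr (hxle (X (c + 1)))
          linarith
        exact mul_nonpos_iff.mpr (Or.inl ⟨h1.le, h2⟩)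
      · have hfac : ((∑ j ∈ X (c + 1), x j : ℤ) : ℝ) - ((∑ j ∈ X (c + 1), z j : ℤ) : ℝ) = 0 := by
          rw [show c + 1 = t from h, hXt, hxtot, hztot]; ring
        rw [hfac, mul_zero]
    have hsum0 : ∑ c ∈ Finset.range t, (g c - g (c + 1)) *
        (((∑ j ∈ X (c + 1), x j : ℤ) : ℝ) - ((∑ j ∈ X (c + 1), z j : ℤ) : ℝ)) = 0 :=
      le_antisymm (Finset.sum_nonpos hterm) (by rw [← hEq]; linarith)
    have hzero := (Finset.sum_eq_zero_iff_of_nonpos hterm).mp hsum0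
    have hXeq : ∀ c, c ≤ t → ∑ j ∈ X c, x j = ρ (X c) := by
      intro c hc
      rcases Nat.eq_zero_or_pos c with rfl | hpos
      · rw [hX0]; simp [hempty]
      · rcases lt_or_eq_of_le hc with hlt | rfl
        · obtain ⟨c', rfl⟩ : ∃ c', c = c' + 1 := ⟨c - 1, by omega⟩
          have hz := hzero c' (Finset.mem_range.mpr (by omega))
          have hcp := hcoef_pos c' hlt
          have hfac : ((∑ j ∈ X (c' + 1), x j : ℤ) : ℝ) - ((∑ j ∈ X (c' + 1), z j : ℤ) : ℝ) = 0 := by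
            rcases mul_eq_zero.mp hz with h | h
            · linarith
            · exact h
          rw [hzX] at hfac
          have := sub_eq_zero.mp hfac
          exact_mod_cast this
        · rw [hXt]; exact hxtot
    refine ⟨hx0, fun k => ⟨?_, ?_⟩⟩
    · intro S hS
      rw [hA]
      rw [hMk] at hS
      have hdisjS : Disjoint S (X (k : ℕ)) := ((hdisj (k : ℕ)).mono_right hS).symm
      have hsum : ∑ j ∈ S ∪ X (k : ℕ), x j = ∑ j ∈ S, x j + ∑ j ∈ X (k : ℕ), x j :=
        Finset.sum_union hdisjS
      have h1 := hxle (S ∪ X (k : ℕ))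
      have h2 := hXeq (k : ℕ) (le_of_lt k.isLt)
      omega
    · rw [hMA, hA, hMk]
      have h1 := hsplit_sum (k : ℕ) x
      have h2 := hXeq (k : ℕ) (le_of_lt k.isLt)
      have h3 := hXeq ((k : ℕ) + 1) k.isLt
      omega
  · rintro ⟨hx0, hk⟩
    have hMsum : ∀ c (hc : c < t), ∑ j ∈ Mn c, x j = ρ (X (c + 1)) - ρ (X c) := by
      intro c hc
      have h := (hk ⟨c, hc⟩).2
      rw [hMA ⟨c, hc⟩, hA ⟨c, hc⟩, hMk ⟨c, hc⟩] at h
      exact h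
    have hSle : ∀ c (hc : c < t), ∀ S ⊆ Mn c, ∑ j ∈ S, x j ≤ ρ (S ∪ X c) - ρ (X c) := by
      intro c hc S hS
      have h := (hk ⟨c, hc⟩).1 S (by rw [hMk ⟨c, hc⟩]; exact hS)
      rwa [hA ⟨c, hc⟩] at h
    have hXeq : ∀ c, c ≤ t → ∑ j ∈ X c, x j = ρ (X c) := by
      intro c
      induction c with
      | zero => intro _; rw [hX0]; simp [hempty]
      | succ c ih =>
        intro hc
        rw [hsplit_sum c x, ih (by omega), hMsum c (by omega)]
        ring
    have hxtot : ∑ j, x j = ρ Finset.univ := by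
      have h := hXeq t le_rfl; rwa [hXt] at h
    have hxle : ∀ S : Finset M, ∑ j ∈ S, x j ≤ ρ S := by
      have key : ∀ c, c ≤ t → ∀ S : Finset M, ∑ j ∈ S ∩ X c, x j ≤ ρ (S ∩ X c) := by
        intro c
        induction c with
        | zero => intro _ S; rw [hX0, Finset.inter_empty]; simp [hempty]
        | succ c ih =>
          intro hc S
          have h1 : S ∩ X (c + 1) = (S ∩ X c) ∪ (S ∩ Mn c) := by
            rw [hXsplit c, Finset.inter_union_distrib_left]
          have hd : Disjoint (S ∩ X c) (S ∩ Mn c) :=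
            (hdisj c).mono Finset.inter_subset_right Finset.inter_subset_right
          have h2 : ∑ j ∈ S ∩ X (c + 1), x j = ∑ j ∈ S ∩ X c, x j + ∑ j ∈ S ∩ Mn c, x j := by
            rw [h1, Finset.sum_union hd]
          have h3 := hSle c (by omega) (S ∩ Mn c) Finset.inter_subset_right
          have h4 := submod_sets ρ hmono hsub (S ∩ Mn c) (S ∩ X c) (X c)
            Finset.inter_subset_right
          have h5 : (S ∩ Mn c) ∪ X c = X c ∪ (S ∩ Mn c) := Finset.union_comm _ _
          have h6 : (S ∩ X c) ∪ (S ∩ Mn c) = S ∩ X (c + 1) := h1.symm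
          have ihS := ih (by omega) S
          rw [h5] at h3
          rw [h6] at h4
          omega
      intro S
      have h := key t le_rfl S
      rwa [hXt, Finset.inter_univ] at h
    refine ⟨⟨hx0, hxle, hxtot⟩, ?_⟩
    rintro y ⟨hy0, hyle, hytot⟩
    have hEq := hdiff x y (by rw [hxtot, hytot])
    have hterm : ∀ c ∈ Finset.range t, 0 ≤ (g c - g (c + 1)) *
        (((∑ j ∈ X (c + 1), x j : ℤ) : ℝ) - ((∑ j ∈ X (c + 1), y j : ℤ) : ℝ)) := by
      intro c hc
      rw [Finset.mem_range] at hc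
      rcases lt_or_eq_of_le (Nat.succ_le_of_lt hc) with h | h
      · apply mul_nonneg (hcoef_pos c h).le
        rw [hXeq (c + 1) (by omega)]
        have h2 : ((∑ j ∈ X (c + 1), y j : ℤ) : ℝ) ≤ ((ρ (X (c + 1)) : ℤ) : ℝ) :=
          Int.cast_le.mpr (hyle (X (c + 1)))
        linarith
      · have hfac : ((∑ j ∈ X (c + 1), x j : ℤ) : ℝ) - ((∑ j ∈ X (c + 1), y j : ℤ) : ℝ) = 0 := by
          rw [show c + 1 = t from h, hXt, hxtot, hytot]; ring
        rw [hfac, mul_zero]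
    have hpos := Finset.sum_nonneg hterm
    linarith
end
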